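/- Transfer theorem: Let ⟨A, C, d, O, v, (≺_a)⟩ be an infinite sequential game and Γ ⊆ P(C^ω). Assume: (1) O is well-orderable; (2) each ≺_a⁻¹ is strictly well-founded; (3) for all O' ⊆ O, c ∈ C, γ ∈ C*, the set v⁻¹(O') ∩ γ(C−{c})C^ω belongs to Γ; (4) the two-player win-lose game ⟨C, D, W⟩ is determined for all W ∈ Γ and D ⊆ C*. Then the game has a Nash equilibrium. -/

import Mathlib

/-!
Rank outcomes for agent `a` by the well-founded relation `≺ₐ⁻¹`; every strict improvement
lowers the rank, so it suffices to work with ordinal costs. Build a main play along which each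
agent, at each of its nodes, commits to a strategy forcing the least cost bound it can force from
there, switching only when that bound strictly drops. By well-foundedness each agent switches
finitely often, and after its last switch the main play follows its committed strategy, so the
main play costs it less than any bound it could force at any of its nodes. Hence no agent can
force an improvement by leaving the main play at one of its nodes; by determinacy its opponents
can then punish every such deviation, and following the main play until the first deviation
and the punishment attached to it afterwards is a Nash equilibrium.
-/

variable {C A O : Type*}

/-- The prefix of length `n` of an infinite play. -/
def pref (p : ℕ → C) (n : ℕ) : List C := List.ofFn (fun i : Fin n => p (i : ℕ))

/-- Plays compatible with a partial strategy profile. -/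
def Plays (s : List C → Option C) : Set (ℕ → C) :=
  {p | ∀ (n : ℕ) (c : C), s (pref p n) = some c → p n = c}

/-- The history of length n induced by a total strategy profile. -/
def hist (t : List C → C) : ℕ → List C
  | 0 => []
  | n + 1 => hist t n ++ [t (hist t n)]

/-- The play induced by a total strategy profile: p(t)_n = t(p(t)_{<n}). -/
def play (t : List C → C) (n : ℕ) : C := t (hist t n)

open Classical in
/-- Restriction of a partial strategy profile to a set of histories. -/
noncomputable def restr (s : List C → Option C) (X : Set (List C)) (γ : List C) : Option C :=
  if γ ∈ X then s γ else none

/-- Restriction of a total strategy profile to a set of histories (as a partial one). -/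
noncomputable def restrT (s : List C → C) (X : Set (List C)) : List C → Option C :=
  restr (fun γ => some (s γ)) X

/-- γC^* : finite sequences extending γ. -/
def ext (γ : List C) : Set (List C) := {δ | γ <+: δ}

/-- γC^ω : infinite sequences extending γ. -/
def extω (γ : List C) : Set (ℕ → C) := {p | pref p γ.length = γ}


/-- A <ₐ-terminal interval. -/
def Terminal (lt : O → O → Prop) (I : Set O) : Prop := ∀ x y, lt x y → x ∈ I → y ∈ I

/-- The guarantee g_a(γ, s) of agent a at node γ under strategy profile s. -/
noncomputable def guar (d : List C → A) (v : (ℕ → C) → O) (lt : A → O → O → Prop)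
    (a : A) (γ : List C) (s : List C → C) : Set O :=
  {o | ∃ p ∈ Plays (restrT s {δ | δ ∈ ext γ ∧ d δ = a}) ∩ extω γ, lt a (v p) o ∨ v p = o}

/-- The best guarantee G_a(γ). -/
noncomputable def bestGuar (d : List C → A) (v : (ℕ → C) → O) (lt : A → O → O → Prop)
    (a : A) (γ : List C) : Set O :=
  ⋂ s : List C → C, guar d v lt a γ s

/-- Nash equilibrium of an infinite sequential game. -/
def NashEq (d : List C → A) (v : (ℕ → C) → O) (prec : A → O → O → Prop)
    (s : List C → C) : Prop :=
  ∀ (a : A) (s' : List C → C), (∀ γ, d γ ≠ a → s' γ = s γ) →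
    ¬ prec a (v (play s)) (v (play s'))

/-- Winning strategy for agent a (owning D) in ⟨C, D, W⟩. -/
def WinA (D : Set (List C)) (W : Set (ℕ → C)) (sa : List C → C) : Prop :=
  ∀ t : List C → C, (∀ γ ∈ D, t γ = sa γ) → play t ∈ W

/-- Winning strategy for agent b (owning C^* \ D) in ⟨C, D, W⟩. -/
def WinB (D : Set (List C)) (W : Set (ℕ → C)) (sb : List C → C) : Prop :=
  ∀ t : List C → C, (∀ γ ∉ D, t γ = sb γ) → play t ∉ W

/-- Determinacy of the two-agent win-lose game ⟨C, D, W⟩. -/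
def Determined (D : Set (List C)) (W : Set (ℕ → C)) : Prop :=
  (∃ sa, WinA D W sa) ∨ (∃ sb, WinB D W sb)

theorem exists_last_ne {β : Type*} {f : ℕ → β} {N : ℕ} (hN : ∀ m ≥ N, f m = f N)
    (h0 : f 0 ≠ f N) : ∃ k, f (k + 1) ≠ f k ∧ ∀ m ≥ k + 1, f m = f N := by
  classical
  have hex : ∃ k, ∀ m ≥ k, f m = f N := ⟨N, hN⟩
  have hpos : Nat.find hex ≠ 0 := fun h => h0 (Nat.find_spec hex 0 (by omega))
  obtain ⟨k, hk⟩ := Nat.exists_eq_add_one_of_ne_zero hpos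
  refine ⟨k, fun hfk => ?_, fun m hm => Nat.find_spec hex m (by omega)⟩
  have hstable : ∀ m ≥ k, f m = f N := fun m hm => by
    by_cases hmk : m = k
    · rw [hmk, ← hfk]
      exact Nat.find_spec hex (k + 1) (by omega)
    · exact Nat.find_spec hex m (by omega)
  have := Nat.find_min' hex hstable
  omega

section Plays

theorem length_pref (p : ℕ → C) (n : ℕ) : (pref p n).length = n := by
  simp [pref]

theorem pref_succ (p : ℕ → C) (n : ℕ) : pref p (n + 1) = pref p n ++ [p n] := by
  simp only [pref, List.ofFn_succ_last, Fin.val_castSucc, Fin.val_last]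

theorem getElem?_pref (p : ℕ → C) (n i : ℕ) :
    (pref p n)[i]? = if i < n then some (p i) else none := by
  simp [pref, List.getElem?_ofFn]

theorem pref_eq_pref_iff {p q : ℕ → C} {n : ℕ} : pref p n = pref q n ↔ ∀ i < n, p i = q i := by
  simp [pref, List.ofFn_inj, funext_iff, Fin.forall_iff]

theorem pref_prefix_pref (p : ℕ → C) {m n : ℕ} (h : m ≤ n) : pref p m <+: pref p n :=
  List.prefix_iff_getElem.2 ⟨by simpa [length_pref] using h, fun i _ => by simp [pref]⟩

theorem pref_play (t : List C → C) (n : ℕ) : pref (play t) n = hist t n := by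
  induction n with
  | zero => rfl
  | succ n ih => rw [pref_succ, hist, ih, play]

theorem play_apply (t : List C → C) (n : ℕ) : play t n = t (pref (play t) n) := by
  rw [pref_play, play]

theorem play_eq_of_forall {t : List C → C} {q : ℕ → C} (h : ∀ n, t (pref q n) = q n) :
    play t = q := by
  have hist_eq : ∀ n, hist t n = pref q n := by
    intro n
    induction n with
    | zero => rfl
    | succ n ih => rw [hist, ih, pref_succ, h n]
  funext n
  rw [play, hist_eq, h]

end Plays

section Strategies

open Classical in
noncomputable def followOff (D : Set (List C)) (σ : List C → C) (q : ℕ → C) (δ : List C) : C :=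
  if δ ∈ D then σ δ else q δ.length

theorem followOff_of_mem {D : Set (List C)} {δ : List C} (σ : List C → C) (q : ℕ → C)
    (h : δ ∈ D) : followOff D σ q δ = σ δ :=
  if_pos h

theorem play_followOff {D : Set (List C)} {σ : List C → C} {q : ℕ → C}
    (h : ∀ n, pref q n ∈ D → σ (pref q n) = q n) : play (followOff D σ q) = q := by
  refine play_eq_of_forall fun n => ?_
  by_cases hn : pref q n ∈ D
  · rw [followOff_of_mem σ q hn, h n hn]
  · simp [followOff, hn, length_pref]

theorem WinA.mem_of_forall {D : Set (List C)} {W : Set (ℕ → C)} {sa : List C → C}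
    (hsa : WinA D W sa) {q : ℕ → C} (h : ∀ n, pref q n ∈ D → sa (pref q n) = q n) : q ∈ W :=
  play_followOff h ▸ hsa _ fun _ hγ => followOff_of_mem sa q hγ

theorem WinB.notMem_of_forall {D : Set (List C)} {W : Set (ℕ → C)} {sb : List C → C}
    (hsb : WinB D W sb) {q : ℕ → C} (h : ∀ n, pref q n ∉ D → sb (pref q n) = q n) : q ∉ W :=
  play_followOff (D := Dᶜ) h ▸ hsb _ fun _ hγ => followOff_of_mem (D := Dᶜ) sb q hγ

theorem WinA.mono {D : Set (List C)} {W W' : Set (ℕ → C)} {sa : List C → C}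
    (hsa : WinA D W sa) (hW : W ⊆ W') : WinA D W' sa :=
  fun t ht => hW (hsa t ht)

theorem WinA.apply_pref {D : Set (List C)} {W : Set (ℕ → C)} {sa : List C → C}
    (hsa : WinA D W sa) {q : ℕ → C} {k : ℕ} (hW : W ⊆ extω (pref q k)) {j : ℕ} (hj : j < k)
    (hD : pref q j ∈ D) : sa (pref q j) = q j := by
  let t := followOff D sa q
  have hk : pref (play t) k = pref q k := by
    simpa [extω, length_pref] using hW (hsa t fun _ hγ => followOff_of_mem sa q hγ)
  have hj' : pref (play t) j = pref q j :=
    pref_eq_pref_iff.2 fun i hi => pref_eq_pref_iff.1 hk i (hi.trans hj)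
  rw [← pref_eq_pref_iff.1 hk j hj, play_apply, hj']
  exact (followOff_of_mem sa q hD).symm

end Strategies

section Punishment

def ownedFrom (d : List C → A) (a : A) (γ : List C) : Set (List C) := {δ | d δ = a ∨ ¬ γ <+: δ}

def deviations (γ : List C) (c : C) : Set (ℕ → C) := {p | p ∈ extω γ ∧ p γ.length ≠ c}

open Classical in
noncomputable def punishProfile (M : ℕ → C) (sb : ℕ → List C → C) (δ : List C) : C :=
  if δ = pref M δ.length then M δ.length else sb (sInf {i | δ[i]? ≠ some (M i)}) δ

variable {M : ℕ → C} {sb : ℕ → List C → C}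

theorem punishProfile_pref (n : ℕ) : punishProfile M sb (pref M n) = M n := by
  simp [punishProfile, length_pref]

theorem play_punishProfile : play (punishProfile M sb) = M :=
  play_eq_of_forall punishProfile_pref

theorem punishProfile_pref_of_lt {q : ℕ → C} {n j : ℕ} (hqn : pref q n = pref M n)
    (hn : q n ≠ M n) (hj : n < j) : punishProfile M sb (pref q j) = sb n (pref q j) := by
  have hoff : pref q j ≠ pref M (pref q j).length := by
    rw [length_pref]
    intro h
    simpa [getElem?_pref, hj, hn] using congrArg (·[n]?) h
  have hfirst : sInf {i | (pref q j)[i]? ≠ some (M i)} = n := by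
    have hmem : n ∈ {i | (pref q j)[i]? ≠ some (M i)} := by simp [getElem?_pref, hj, hn]
    refine le_antisymm (Nat.sInf_le hmem) (le_csInf ⟨n, hmem⟩ fun i hi => not_lt.1 fun hin => ?_)
    simp [getElem?_pref, hin.trans hj, pref_eq_pref_iff.1 hqn i hin] at hi
  rw [punishProfile, if_neg hoff, hfirst]

theorem nashEq_punishProfile {d : List C → A} {v : (ℕ → C) → O} {prec : A → O → O → Prop}
    (hirr : ∀ a, ¬ prec a (v M) (v M))
    (hsb : ∀ n, WinB (ownedFrom d (d (pref M n)) (pref M n))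
      (v ⁻¹' {o | prec (d (pref M n)) (v M) o} ∩ deviations (pref M n) (M n)) (sb n)) :
    NashEq d v prec (punishProfile M sb) := by
  classical
  intro a s' hs' hprec
  rw [play_punishProfile] at hprec
  set q := play s'
  have hq : ∃ n, q n ≠ M n := by
    by_contra! h
    exact hirr a (funext h ▸ hprec)
  set n := Nat.find hq
  have hdev : q n ≠ M n := Nat.find_spec hq
  have hqn : pref q n = pref M n :=
    pref_eq_pref_iff.2 fun i hi => not_not.1 (Nat.find_min hq hi)
  have hs'q : ∀ j, s' (pref q j) = q j := fun j => (play_apply s' j).symm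
  have hown : d (pref M n) = a := by
    by_contra h
    apply hdev
    rw [← hs'q, hqn, hs' _ h, punishProfile_pref]
  refine (hsb n).notMem_of_forall (q := q) (fun j hj => ?_) ⟨?_, ?_⟩
  · simp only [ownedFrom, hown, Set.mem_ofPred_eq, not_or, not_not] at hj
    obtain ⟨hja, hpre⟩ := hj
    have hnj : n < j := by
      have hle := hpre.length_le
      rw [length_pref, length_pref] at hle
      refine lt_of_le_of_ne hle fun h => hja ?_
      rw [← h, hqn, hown]
    rw [← punishProfile_pref_of_lt (sb := sb) hqn hdev hnj, ← hs' _ hja, hs'q]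
  · show prec (d (pref M n)) (v M) (v q)
    rwa [hown]
  · exact ⟨show pref q (pref M n).length = _ by rwa [length_pref], by rwa [length_pref]⟩

end Punishment

section Commitment

variable {L : Type*} [LinearOrder L] [WellFoundedLT L] (d : List C → A) (u : A → (ℕ → C) → L)

def CanForceBelow (a : A) (γ : List C) (t : WithTop L) : Prop :=
  ∃ sa, WinA (ownedFrom d a γ) {p | p ∈ extω γ ∧ (u a p : WithTop L) < t} sa

/-- The least cost bound `a` can force from `γ`, or `⊤` if it can force none. -/
noncomputable def bestBound (a : A) (γ : List C) : WithTop L :=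
  wellFounded_lt.min (insert ⊤ {t | CanForceBelow d u a γ t} : Set (WithTop L))
    (Set.insert_nonempty _ _)

variable {d u}

theorem bestBound_le {a : A} {γ : List C} {t : WithTop L} (h : CanForceBelow d u a γ t) :
    bestBound d u a γ ≤ t :=
  wellFounded_lt.min_le (Set.mem_insert_of_mem (⊤ : WithTop L) h)

theorem canForceBelow_bestBound {a : A} {γ : List C} (h : bestBound d u a γ ≠ ⊤) :
    CanForceBelow d u a γ (bestBound d u a γ) :=
  (wellFounded_lt.min_mem (insert ⊤ {t | CanForceBelow d u a γ t} : Set (WithTop L)) _).resolve_left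
    h

variable (d u)

/-- A stage of the main play: the current node, and for each agent the node at which it last
committed to its `bestBound`, if any. -/
structure Stage (A C : Type*) where
  node : List C
  commit : A → Option (List C)

noncomputable def commitBound (a : A) (c : Option (List C)) : WithTop L :=
  c.elim ⊤ (bestBound d u a)

def Stage.Improves (σ : Stage A C) : Prop :=
  bestBound d u (d σ.node) σ.node < commitBound d u (d σ.node) (σ.commit (d σ.node))

open Classical in
noncomputable def Stage.nextCommit (σ : Stage A C) : A → Option (List C) :=
  if σ.Improves d u then Function.update σ.commit (d σ.node) (some σ.node) else σ.commit

variable {d u}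

theorem Stage.nextCommit_ne {σ : Stage A C} {a : A} (h : σ.nextCommit d u a ≠ σ.commit a) :
    d σ.node = a ∧ σ.Improves d u ∧ σ.nextCommit d u a = some σ.node := by
  classical
  by_cases hI : σ.Improves d u
  · have hda : d σ.node = a := by
      by_contra hda
      exact h (by rw [nextCommit, if_pos hI, Function.update_of_ne (Ne.symm hda)])
    subst hda
    exact ⟨rfl, hI, by rw [nextCommit, if_pos hI, Function.update_self]⟩
  · exact absurd (by rw [nextCommit, if_neg hI]) h

theorem Stage.commitBound_nextCommit_lt {σ : Stage A C} {a : A}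
    (h : σ.nextCommit d u a ≠ σ.commit a) :
    commitBound d u a (σ.nextCommit d u a) < commitBound d u a (σ.commit a) := by
  obtain ⟨rfl, hI, hc⟩ := nextCommit_ne h
  rw [hc]
  exact hI

theorem Stage.commitBound_nextCommit_le (σ : Stage A C) (a : A) :
    commitBound d u a (σ.nextCommit d u a) ≤ commitBound d u a (σ.commit a) := by
  by_cases h : σ.nextCommit d u a = σ.commit a
  · rw [h]
  · exact (commitBound_nextCommit_lt h).le

theorem Stage.commitBound_nextCommit_le_bestBound (σ : Stage A C) :
    commitBound d u (d σ.node) (σ.nextCommit d u (d σ.node)) ≤ bestBound d u (d σ.node) σ.node := by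
  classical
  by_cases hI : σ.Improves d u
  · rw [nextCommit, if_pos hI, Function.update_self]
    rfl
  · rw [nextCommit, if_neg hI]
    exact not_lt.1 hI

variable (d u) [Nonempty C]

noncomputable def boundWitness (a : A) (γ : List C) : List C → C :=
  Classical.epsilon fun sa =>
    WinA (ownedFrom d a γ) {p | p ∈ extω γ ∧ (u a p : WithTop L) < bestBound d u a γ} sa

noncomputable def Stage.nextMove (σ : Stage A C) : C :=
  (σ.nextCommit d u (d σ.node)).elim (Classical.arbitrary C)
    fun γ => boundWitness d u (d σ.node) γ σ.node

noncomputable def stage : ℕ → Stage A C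
  | 0 => ⟨[], fun _ => none⟩
  | n + 1 => ⟨(stage n).node ++ [(stage n).nextMove d u], (stage n).nextCommit d u⟩

noncomputable def mainPlay (n : ℕ) : C := (stage d u n).nextMove d u

variable {d u}

theorem winA_boundWitness {a : A} {γ : List C} (h : bestBound d u a γ ≠ ⊤) :
    WinA (ownedFrom d a γ) {p | p ∈ extω γ ∧ (u a p : WithTop L) < bestBound d u a γ}
      (boundWitness d u a γ) :=
  Classical.epsilon_spec (canForceBelow_bestBound h)

theorem node_stage (n : ℕ) : (stage d u n).node = pref (mainPlay d u) n := by
  induction n with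
  | zero => rfl
  | succ n ih => rw [pref_succ, ← ih]; rfl

theorem commit_stage_succ (n : ℕ) :
    (stage d u (n + 1)).commit = (stage d u n).nextCommit d u :=
  rfl

theorem mainPlay_eq_boundWitness {a : A} {j : ℕ} {γ : List C}
    (ha : d (pref (mainPlay d u) j) = a) (hc : (stage d u (j + 1)).commit a = some γ) :
    mainPlay d u j = boundWitness d u a γ (pref (mainPlay d u) j) := by
  rw [← node_stage] at ha ⊢
  subst ha
  rw [mainPlay, Stage.nextMove, ← commit_stage_succ, hc]
  rfl

theorem antitone_commitBound_stage (a : A) :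
    Antitone fun n => commitBound d u a ((stage d u n).commit a) :=
  antitone_nat_of_succ_le fun n => (stage d u n).commitBound_nextCommit_le a

theorem exists_commit_stage_eventually_eq (a : A) :
    ∃ N, ∀ m ≥ N, (stage d u m).commit a = (stage d u N).commit a := by
  obtain ⟨N, hN⟩ := WellFoundedLT.antitone_chain_condition (antitone_commitBound_stage (d := d) (u := u) a)
  refine ⟨N, fun m hm => ?_⟩
  induction m, hm using Nat.le_induction with
  | base => rfl
  | succ m hm ih =>
    rw [← ih]
    by_contra hne
    have hlt := Stage.commitBound_nextCommit_lt hne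
    rw [← commit_stage_succ, ← hN m hm, ← hN (m + 1) (by omega)] at hlt
    exact lt_irrefl _ hlt

/-- From an agent's last change of commitment on, the main play follows the committed witness. -/
theorem cost_mainPlay_lt_bestBound {a : A} {k : ℕ}
    (hchange : (stage d u (k + 1)).commit a ≠ (stage d u k).commit a)
    (hstable : ∀ j ≥ k + 1, (stage d u j).commit a = (stage d u (k + 1)).commit a) :
    (u a (mainPlay d u) : WithTop L) < bestBound d u a (pref (mainPlay d u) k) := by
  obtain ⟨hka, hI, hc⟩ := Stage.nextCommit_ne hchange
  unfold Stage.Improves at hI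
  rw [node_stage] at hka hc hI
  rw [hka] at hI
  have hfin : bestBound d u a (pref (mainPlay d u) k) ≠ ⊤ := hI.ne_top
  refine ((winA_boundWitness hfin).mem_of_forall fun j hj => ?_).2
  rcases lt_or_ge j k with hjk | hkj
  · exact (winA_boundWitness hfin).apply_pref (fun p hp => hp.1) hjk hj
  · have hd := hj.resolve_right (not_not.2 (pref_prefix_pref _ hkj))
    exact (mainPlay_eq_boundWitness hd ((hstable (j + 1) (by omega)).trans hc)).symm

theorem exists_cost_mainPlay_lt_commitBound (a : A) :
    ∃ N, ∀ m ≥ N,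
      (u a (mainPlay d u) : WithTop L) < commitBound d u a ((stage d u m).commit a) := by
  obtain ⟨N, hN⟩ := exists_commit_stage_eventually_eq (d := d) (u := u) a
  refine ⟨N, fun m hm => ?_⟩
  rw [hN m hm]
  cases hcN : (stage d u N).commit a with
  | none => exact WithTop.coe_lt_top _
  | some γ =>
    obtain ⟨k, hchange, hlast⟩ := exists_last_ne (f := fun n => (stage d u n).commit a) hN
      (by rw [hcN]; exact (Option.some_ne_none γ).symm)
    have hk : (stage d u (k + 1)).commit a = some γ := (hlast (k + 1) le_rfl).trans hcN
    have hγ : γ = pref (mainPlay d u) k := by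
      obtain ⟨-, -, hc⟩ := Stage.nextCommit_ne hchange
      rw [← commit_stage_succ, hk, node_stage] at hc
      exact Option.some_injective _ hc
    subst hγ
    exact cost_mainPlay_lt_bestBound hchange fun j hj =>
      (hlast j hj).trans (hlast (k + 1) le_rfl).symm

theorem not_canForceBelow_mainPlay (n : ℕ) :
    ¬ CanForceBelow d u (d (pref (mainPlay d u) n)) (pref (mainPlay d u) n)
      (u (d (pref (mainPlay d u) n)) (mainPlay d u)) := by
  intro hforce
  set a := d (pref (mainPlay d u) n)
  obtain ⟨N, hN⟩ := exists_cost_mainPlay_lt_commitBound (d := d) (u := u) a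
  have hbest := (stage d u n).commitBound_nextCommit_le_bestBound (d := d) (u := u)
  rw [node_stage, ← commit_stage_succ] at hbest
  refine lt_irrefl (u a (mainPlay d u) : WithTop L) ?_
  calc (u a (mainPlay d u) : WithTop L)
      _ < commitBound d u a ((stage d u (max N (n + 1))).commit a) := hN _ (le_max_left _ _)
      _ ≤ commitBound d u a ((stage d u (n + 1)).commit a) :=
          antitone_commitBound_stage a (le_max_right _ _)
      _ ≤ bestBound d u a (pref (mainPlay d u) n) := hbest
      _ ≤ u a (mainPlay d u) := bestBound_le hforce

end Commitment

theorem transfer_theorem_general {A C O : Type*} [Nonempty C]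
    (d : List C → A) (v : (ℕ → C) → O) (prec : A → O → O → Prop)
    (Γ : Set (Set (ℕ → C)))
    (h2 : ∀ a, WellFounded (fun x y => prec a y x))
    (h3 : ∀ (O' : Set O) (c : C) (γ : List C),
      v ⁻¹' O' ∩ {p | p ∈ extω γ ∧ p γ.length ≠ c} ∈ Γ)
    (h4 : ∀ W ∈ Γ, ∀ D : Set (List C), Determined D W) :
    ∃ s : List C → C, NashEq d v prec s := by
  let rank : A → O → Ordinal := fun a o => ((h2 a).apply o).rank
  have rank_lt : ∀ a x y, prec a x y → rank a y < rank a x :=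
    fun a x _ h => Acc.rank_lt_of_rel ((h2 a).apply x) h
  let M := mainPlay d fun a p => rank a (v p)
  have hpunish : ∀ n, ∃ sb, WinB (ownedFrom d (d (pref M n)) (pref M n))
      (v ⁻¹' {o | prec (d (pref M n)) (v M) o} ∩ deviations (pref M n) (M n)) sb := by
    refine fun n => (h4 _ (h3 _ (M n) (pref M n)) _).resolve_left fun ⟨sa, hsa⟩ =>
      not_canForceBelow_mainPlay n ⟨sa, hsa.mono ?_⟩
    rintro p ⟨hp, hdev⟩
    exact ⟨hdev.1, WithTop.coe_lt_coe.2 (rank_lt _ _ _ hp)⟩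
  choose sb hsb using hpunish
  exact ⟨_, nashEq_punishProfile (fun a => (h2 a).irrefl.irrefl _) hsb⟩

/-- **Transfer theorem.** If O is well-orderable, each inverse
preference is strictly well-founded, the relevant sets built from v lie in Γ, and all
two-agent win-lose games with winning sets in Γ are determined, then the infinite
sequential game has a Nash equilibrium. -/
theorem transfer_theorem {A C O : Type*} [Nonempty A] [Nonempty C] [Nonempty O]
    (d : List C → A) (v : (ℕ → C) → O) (prec : A → O → O → Prop)
    (Γ : Set (Set (ℕ → C)))
    (h1 : ∃ r : O → O → Prop, IsWellOrder O r)
    (h2 : ∀ a, WellFounded (fun x y => prec a y x))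
    (h3 : ∀ (O' : Set O) (c : C) (γ : List C),
      v ⁻¹' O' ∩ {p | p ∈ extω γ ∧ p γ.length ≠ c} ∈ Γ)
    (h4 : ∀ W ∈ Γ, ∀ D : Set (List C), Determined D W) :
    ∃ s : List C → C, NashEq d v prec s :=
  transfer_theorem_general d v prec Γ h2 h3 h4
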